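/- arXiv:1109.4537 — 8 statements merged into one kernel-verified Lean document; each statement's English description precedes it below -/
import Mathlib

section
/- Let T be the linear operator on the 28-dimensional real vector space of antisymmetric 8×8 real matrices defined by (T F)_{μν} = (1/2) Σ_{ρ,σ} Ω_{μνρσ} F_{ρσ}. Then T satisfies the quadratic relation (T + id) ∘ (T − 3·id) = 0, i.e. for every antisymmetric 8×8 real matrix F one has T(T(F)) = 2·T(F) + 3·F. -/
/-- The 14 basic (ascending) index quadruples of the Spin(7) four-form `Ω` on ℝ⁸,
together with their values. -/
def OmegaBase : List ((Fin 4 → Fin 8) × ℝ) :=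
  [(![0,1,2,3], 1), (![0,1,4,5], 1), (![0,1,6,7], 1), (![0,2,4,6], 1),
   (![0,2,5,7], -1), (![0,3,4,7], -1), (![0,3,5,6], -1),
   (![1,2,4,7], -1), (![1,2,5,6], -1), (![1,3,4,6], -1),
   (![1,3,5,7], 1), (![2,3,4,5], 1), (![2,3,6,7], 1), (![4,5,6,7], 1)]

/-- The totally antisymmetric array `Ω_{μνρσ}`: each basic quadruple `t` with value `v`
contributes `v` times the generalized Kronecker delta `δ^{t}_{μνρσ}` (a determinant),
which is totally antisymmetric, equals `1` when `(μ,ν,ρ,σ)` is an even permutation of `t`,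
`-1` for an odd permutation, and `0` otherwise. -/
noncomputable def Omega (μ ν ρ σ : Fin 8) : ℝ :=
  (OmegaBase.map fun p =>
    p.2 * Matrix.det (Matrix.of fun i j =>
      if p.1 i = ![μ, ν, ρ, σ] j then (1 : ℝ) else 0)).sum

/-- The linear operator `T` on two-forms: `(T F)_{μν} = (1/2) Σ_{ρσ} Ω_{μνρσ} F_{ρσ}`. -/
noncomputable def TOmega (F : Fin 8 → Fin 8 → ℝ) (μ ν : Fin 8) : ℝ :=
  (1 / 2) * ∑ ρ : Fin 8, ∑ σ : Fin 8, Omega μ ν ρ σ * F ρ σ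

theorem det_four {R : Type*} [CommRing R] (A : Matrix (Fin 4) (Fin 4) R) : A.det = A 0 0 * A 1 1 * A 2 2 * A 3 3 - A 0 0 * A 1 1 * A 2 3 * A 3 2 - A 0 0 * A 1 2 * A 2 1 * A 3 3 + A 0 0 * A 1 2 * A 2 3 * A 3 1 + A 0 0 * A 1 3 * A 2 1 * A 3 2 - A 0 0 * A 1 3 * A 2 2 * A 3 1 - A 0 1 * A 1 0 * A 2 2 * A 3 3 + A 0 1 * A 1 0 * A 2 3 * A 3 2 + A 0 1 * A 1 2 * A 2 0 * A 3 3 - A 0 1 * A 1 2 * A 2 3 * A 3 0 - A 0 1 * A 1 3 * A 2 0 * A 3 2 + A 0 1 * A 1 3 * A 2 2 * A 3 0 + A 0 2 * A 1 0 * A 2 1 * A 3 3 - A 0 2 * A 1 0 * A 2 3 * A 3 1 - A 0 2 * A 1 1 * A 2 0 * A 3 3 + A 0 2 * A 1 1 * A 2 3 * A 3 0 + A 0 2 * A 1 3 * A 2 0 * A 3 1 - A 0 2 * A 1 3 * A 2 1 * A 3 0 - A 0 3 * A 1 0 * A 2 1 * A 3 2 + A 0 3 * A 1 0 * A 2 2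 * A 3 1 + A 0 3 * A 1 1 * A 2 0 * A 3 2 - A 0 3 * A 1 1 * A 2 2 * A 3 0 - A 0 3 * A 1 2 * A 2 0 * A 3 1 + A 0 3 * A 1 2 * A 2 1 * A 3 0 := by
  have h1 : (Fin.succ 2 : Fin 4) = 3 := rfl
  have h2 : (Fin.castSucc 2 : Fin 4) = 2 := rfl
  simp only [Matrix.det_succ_row_zero, Fin.sum_univ_succ, Matrix.det_fin_three,
    Matrix.submatrix_apply, Finset.univ_unique, Finset.sum_singleton, Matrix.det_unique,
    Fin.default_eq_zero, Fin.succ_zero_eq_one, Fin.succ_one_eq_two]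
  norm_num [Fin.succAbove, Fin.lt_def]
  simp only [h1, h2]
  ring

def e (x y : ℕ) : ℤ := if x = y then 1 else 0
def detN (a b c d p q r s : ℕ) : ℤ := e a p * e b q * e c r * e d s - e a p * e b q * e c s * e d r - e a p * e b r * e c q * e d s + e a p * e b r * e c s * e d q + e a p * e b s * e c q * e d r - e a p * e b s * e c r * e d q - e a q * e b p * e c r * e d s + e a q * e b p * e c s * e d r + e a q * e b r * e c p * e d s - e a q * e b r * e c s * e d p - e a q * e b s * e c p * e d r + e a q * e b s * e c r * e d p + e a r * e b p * e c q * e d s - e a r * e b p * e c s * e d q - e a r * e b q * e c p * e d s + e a r * e b q * e c s * e d p + e a r * e b s * e c p * e d q - e a r * e b s * e c q * e d p - e a s * e b p * e c q * e d r + e a s * e b p * e c r * e d q + e a s * e b q * e c p * e d r - e a s * e b q * e c r * e d p - e a s * e b r * e c p * e d q + e a s * e b r * e c q * e d p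

set_option maxHeartbeats 2000000 in
theorem det_term (t : Fin 4 → Fin 8) (μ ν ρ σ : Fin 8) :
    Matrix.det (Matrix.of fun i j => if t i = ![μ,ν,ρ,σ] j then (1:ℝ) else 0)
      = ((detN (t 0).val (t 1).val (t 2).val (t 3).val μ.val ν.val ρ.val σ.val : ℤ) : ℝ) := by
  rw [det_four]
  simp only [Matrix.of_apply, Matrix.cons_val_zero, Matrix.cons_val_one, Matrix.head_cons,
    Matrix.cons_val_two, Matrix.tail_cons, Matrix.cons_val_three]
  simp only [detN, e]
  push_cast [apply_ite (fun x : ℤ => (x : ℝ))]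
  simp only [Fin.ext_iff]


def OmegaC (p q r s : ℕ) : ℤ :=
  detN 0 1 2 3 p q r s + detN 0 1 4 5 p q r s + detN 0 1 6 7 p q r s + detN 0 2 4 6 p q r s
  - detN 0 2 5 7 p q r s - detN 0 3 4 7 p q r s - detN 0 3 5 6 p q r s
  - detN 1 2 4 7 p q r s - detN 1 2 5 6 p q r s - detN 1 3 4 6 p q r s
  + detN 1 3 5 7 p q r s + detN 2 3 4 5 p q r s + detN 2 3 6 7 p q r s + detN 4 5 6 7 p q r s

set_option maxHeartbeats 2000000 in
theorem Omega_eq (μ ν ρ σ : Fin 8) :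
    Omega μ ν ρ σ = ((OmegaC μ.val ν.val ρ.val σ.val : ℤ) : ℝ) := by
  have v0 : ((0:Fin 8):ℕ) = 0 := rfl
  have v1 : ((1:Fin 8):ℕ) = 1 := rfl
  have v2 : ((2:Fin 8):ℕ) = 2 := rfl
  have v3 : ((3:Fin 8):ℕ) = 3 := rfl
  have v4 : ((4:Fin 8):ℕ) = 4 := rfl
  have v5 : ((5:Fin 8):ℕ) = 5 := rfl
  have v6 : ((6:Fin 8):ℕ) = 6 := rfl
  have v7 : ((7:Fin 8):ℕ) = 7 := rfl
  simp only [Omega, OmegaBase, List.map_cons, List.map_nil, List.sum_cons, List.sum_nil,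
    det_term, Matrix.cons_val_zero, Matrix.cons_val_one, Matrix.head_cons,
    Matrix.cons_val_two, Matrix.tail_cons, Matrix.cons_val_three,
    v0, v1, v2, v3, v4, v5, v6, v7, OmegaC]
  push_cast
  ring

def sgn (x y : ℕ) : ℤ := if x < y then 1 else if x = y then 0 else -1
def baseVal (m : ℕ) : ℤ :=
  if m = 15 then 1 else if m = 51 then 1 else if m = 195 then 1 else if m = 85 then 1 else
  if m = 165 then -1 else if m = 153 then -1 else if m = 105 then -1 else
  if m = 150 then -1 else if m = 102 then -1 else if m = 90 then -1 else
  if m = 170 then 1 else if m = 60 then 1 else if m = 204 then 1 else if m = 240 then 1 else 0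
def OmegaN (a b c d : ℕ) : ℤ :=
  baseVal (2^a + 2^b + 2^c + 2^d) *
    (sgn a b * sgn a c * sgn a d * sgn b c * sgn b d * sgn c d)

theorem sgn_swap (x y : ℕ) : sgn y x = -sgn x y := by
  unfold sgn; split_ifs <;> omega

theorem sgn_self (x : ℕ) : sgn x x = 0 := by simp [sgn]

theorem OmegaC_swap12 (p q r s : ℕ) : OmegaC q p r s = -OmegaC p q r s := by
  simp only [OmegaC, detN]; ring
theorem OmegaC_swap23 (p q r s : ℕ) : OmegaC p r q s = -OmegaC p q r s := by
  simp only [OmegaC, detN]; ring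
theorem OmegaC_swap34 (p q r s : ℕ) : OmegaC p q s r = -OmegaC p q r s := by
  simp only [OmegaC, detN]; ring

theorem OmegaN_swap12 (p q r s : ℕ) : OmegaN q p r s = -OmegaN p q r s := by
  unfold OmegaN
  have h : 2^q + 2^p + 2^r + 2^s = 2^p + 2^q + 2^r + 2^s := by ring
  rw [h, sgn_swap q p]; ring
theorem OmegaN_swap23 (p q r s : ℕ) : OmegaN p r q s = -OmegaN p q r s := by
  unfold OmegaN
  have h : 2^p + 2^r + 2^q + 2^s = 2^p + 2^q + 2^r + 2^s := by ring
  rw [h, sgn_swap r q]; ring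
theorem OmegaN_swap34 (p q r s : ℕ) : OmegaN p q s r = -OmegaN p q r s := by
  unfold OmegaN
  have h : 2^p + 2^q + 2^s + 2^r = 2^p + 2^q + 2^r + 2^s := by ring
  rw [h, sgn_swap s r]; ring

theorem OmegaC_diag12 (p r s : ℕ) : OmegaC p p r s = 0 := by simp only [OmegaC, detN]; ring
theorem OmegaC_diag23 (p q s : ℕ) : OmegaC p q q s = 0 := by simp only [OmegaC, detN]; ring
theorem OmegaC_diag34 (p q r : ℕ) : OmegaC p q r r = 0 := by simp only [OmegaC, detN]; ring
theorem OmegaN_diag12 (p r s : ℕ) : OmegaN p p r s = 0 := by unfold OmegaN; rw [sgn_self]; ring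
theorem OmegaN_diag23 (p q s : ℕ) : OmegaN p q q s = 0 := by unfold OmegaN; rw [sgn_self]; ring
theorem OmegaN_diag34 (p q r : ℕ) : OmegaN p q r r = 0 := by unfold OmegaN; rw [sgn_self]; ring

set_option synthInstance.maxSize 2000 in
set_option synthInstance.maxHeartbeats 1000000 in
set_option maxHeartbeats 4000000 in
theorem sortedStrict : ∀ p < 8, ∀ q < 8, ∀ r < 8, ∀ s < 8,
    p < q → q < r → r < s → OmegaC p q r s = OmegaN p q r s := by decide

theorem sortedCase : ∀ p q r s : ℕ, p < 8 → q < 8 → r < 8 → s < 8 →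
    p ≤ q → q ≤ r → r ≤ s → OmegaC p q r s = OmegaN p q r s := by
  intro p q r s hp hq hr hs h1 h2 h3
  rcases Nat.eq_or_lt_of_le h1 with h1|h1
  · subst h1; rw [OmegaC_diag12, OmegaN_diag12]
  rcases Nat.eq_or_lt_of_le h2 with h2|h2
  · subst h2; rw [OmegaC_diag23, OmegaN_diag23]
  rcases Nat.eq_or_lt_of_le h3 with h3|h3
  · subst h3; rw [OmegaC_diag34, OmegaN_diag34]
  exact sortedStrict p hp q hq r hr s hs h1 h2 h3

def invc (p q r s : ℕ) : ℕ :=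
  (if q < p then 1 else 0) + (if r < p then 1 else 0) + (if s < p then 1 else 0) +
  (if r < q then 1 else 0) + (if s < q then 1 else 0) + (if s < r then 1 else 0)

theorem bridge_aux : ∀ n, ∀ p q r s : ℕ, p < 8 → q < 8 → r < 8 → s < 8 →
    invc p q r s ≤ n → OmegaC p q r s = OmegaN p q r s := by
  intro n
  induction n with
  | zero =>
    intro p q r s hp hq hr hs h0
    have h1 : ¬ q < p := by unfold invc at h0; split_ifs at h0 <;> omega
    have h2 : ¬ r < q := by unfold invc at h0; split_ifs at h0 <;> omega
    have h3 : ¬ s < r := by unfold invc at h0; split_ifs at h0 <;> omega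
    exact sortedCase p q r s hp hq hr hs (by omega) (by omega) (by omega)
  | succ n ih =>
    intro p q r s hp hq hr hs h0
    by_cases h1 : q < p
    · have hd : invc q p r s + 1 = invc p q r s := by unfold invc; split_ifs <;> omega
      have h := ih q p r s hq hp hr hs (by omega)
      rw [OmegaC_swap12 p q r s, OmegaN_swap12 p q r s] at h
      exact neg_injective h
    · by_cases h2 : r < q
      · have hd : invc p r q s + 1 = invc p q r s := by unfold invc; split_ifs <;> omega
        have h := ih p r q s hp hr hq hs (by omega)
        rw [OmegaC_swap23 p q r s, OmegaN_swap23 p q r s] at h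
        exact neg_injective h
      · by_cases h3 : s < r
        · have hd : invc p q s r + 1 = invc p q r s := by unfold invc; split_ifs <;> omega
          have h := ih p q s r hp hq hs hr (by omega)
          rw [OmegaC_swap34 p q r s, OmegaN_swap34 p q r s] at h
          exact neg_injective h
        · exact sortedCase p q r s hp hq hr hs (by omega) (by omega) (by omega)

theorem OmegaC_eq_OmegaN (p q r s : ℕ) (hp : p < 8) (hq : q < 8) (hr : r < 8) (hs : s < 8) :
    OmegaC p q r s = OmegaN p q r s :=
  bridge_aux (invc p q r s) p q r s hp hq hr hs le_rfl

def dl (x y : ℕ) : ℤ := if x = y then 1 else 0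
def Skey (μ ν α β : ℕ) : ℤ :=
  ∑ ρ ∈ Finset.range 8, ∑ σ ∈ Finset.range 8, OmegaN μ ν ρ σ * OmegaN ρ σ α β
def Rkey (μ ν α β : ℕ) : ℤ :=
  4 * OmegaN μ ν α β + 6 * dl μ α * dl ν β - 6 * dl μ β * dl ν α

set_option synthInstance.maxSize 2000 in
set_option synthInstance.maxHeartbeats 1000000 in
set_option maxHeartbeats 4000000 in
theorem keyRes : ∀ μ < 8, ∀ ν < 8, ∀ α < 8, ∀ β < 8,
    μ < ν → α < β → Skey μ ν α β = Rkey μ ν α β := by decide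

theorem Skey_swap12 (μ ν α β : ℕ) : Skey ν μ α β = -Skey μ ν α β := by
  unfold Skey
  rw [← Finset.sum_neg_distrib]
  refine Finset.sum_congr rfl fun ρ _ => ?_
  rw [← Finset.sum_neg_distrib]
  refine Finset.sum_congr rfl fun σ _ => ?_
  rw [OmegaN_swap12 μ ν ρ σ]; ring

theorem Skey_swap34 (μ ν α β : ℕ) : Skey μ ν β α = -Skey μ ν α β := by
  unfold Skey
  rw [← Finset.sum_neg_distrib]
  refine Finset.sum_congr rfl fun ρ _ => ?_
  rw [← Finset.sum_neg_distrib]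
  refine Finset.sum_congr rfl fun σ _ => ?_
  rw [OmegaN_swap34 ρ σ α β]; ring

theorem Skey_diag12 (μ α β : ℕ) : Skey μ μ α β = 0 := by
  simp [Skey, OmegaN_diag12]

theorem Skey_diag34 (μ ν α : ℕ) : Skey μ ν α α = 0 := by
  simp [Skey, OmegaN_diag34]

theorem Rkey_swap12 (μ ν α β : ℕ) : Rkey ν μ α β = -Rkey μ ν α β := by
  unfold Rkey; rw [OmegaN_swap12]; ring

theorem Rkey_swap34 (μ ν α β : ℕ) : Rkey μ ν β α = -Rkey μ ν α β := by
  unfold Rkey; rw [OmegaN_swap34]; ring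

theorem Rkey_diag12 (μ α β : ℕ) : Rkey μ μ α β = 0 := by
  unfold Rkey; rw [OmegaN_diag12]; ring

theorem Rkey_diag34 (μ ν α : ℕ) : Rkey μ ν α α = 0 := by
  unfold Rkey; rw [OmegaN_diag34]; ring

theorem keyHalf (μ ν α β : ℕ) (hμ : μ < 8) (hν : ν < 8) (hα : α < 8) (hβ : β < 8)
    (h : μ < ν) : Skey μ ν α β = Rkey μ ν α β := by
  rcases Nat.lt_trichotomy α β with hab|hab|hab
  · exact keyRes μ hμ ν hν α hα β hβ h hab
  · subst hab; rw [Skey_diag34, Rkey_diag34]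
  · have h2 := keyRes μ hμ ν hν β hβ α hα h hab
    have e1 := Skey_swap34 μ ν β α
    have e2 := Rkey_swap34 μ ν β α
    rw [h2] at e1; linarith [e1, e2]

theorem keyFull (μ ν α β : ℕ) (hμ : μ < 8) (hν : ν < 8) (hα : α < 8) (hβ : β < 8) :
    Skey μ ν α β = Rkey μ ν α β := by
  rcases Nat.lt_trichotomy μ ν with h|h|h
  · exact keyHalf μ ν α β hμ hν hα hβ h
  · subst h; rw [Skey_diag12, Rkey_diag12]
  · have h2 := keyHalf ν μ α β hν hμ hα hβ h
    have e1 := Skey_swap12 ν μ α β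
    have e2 := Rkey_swap12 ν μ α β
    rw [h2] at e1; linarith [e1, e2]

theorem Omega_eq_N (a b c d : Fin 8) :
    Omega a b c d = ((OmegaN a.val b.val c.val d.val : ℤ) : ℝ) := by
  rw [Omega_eq, OmegaC_eq_OmegaN _ _ _ _ a.isLt b.isLt c.isLt d.isLt]

theorem keyR (μ ν α β : Fin 8) :
    (∑ ρ : Fin 8, ∑ σ : Fin 8, Omega μ ν ρ σ * Omega ρ σ α β)
      = 4 * Omega μ ν α β
        + 6 * (if μ = α then (1:ℝ) else 0) * (if ν = β then (1:ℝ) else 0)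
        - 6 * (if μ = β then (1:ℝ) else 0) * (if ν = α then (1:ℝ) else 0) := by
  have key := keyFull μ.val ν.val α.val β.val μ.isLt ν.isLt α.isLt β.isLt
  have L : (∑ ρ : Fin 8, ∑ σ : Fin 8, Omega μ ν ρ σ * Omega ρ σ α β)
      = ((Skey μ.val ν.val α.val β.val : ℤ) : ℝ) := by
    simp only [Omega_eq_N, Skey]
    push_cast
    rw [← Fin.sum_univ_eq_sum_range (fun r => ∑ s ∈ Finset.range 8,
      ((OmegaN μ.val ν.val r s : ℤ):ℝ) * ((OmegaN r s α.val β.val : ℤ):ℝ)) 8]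
    exact Finset.sum_congr rfl fun ρ _ =>
      (Fin.sum_univ_eq_sum_range (fun s =>
        ((OmegaN μ.val ν.val ρ.val s : ℤ):ℝ) * ((OmegaN ρ.val s α.val β.val : ℤ):ℝ)) 8).symm
  have dcast : ∀ a b : Fin 8, ((dl a.val b.val : ℤ) : ℝ) = if a = b then (1:ℝ) else 0 := by
    intro a b
    simp only [dl, apply_ite (fun x : ℤ => (x : ℝ)), Int.cast_one, Int.cast_zero, Fin.val_eq_val]
  have R : (4 * Omega μ ν α β
        + 6 * (if μ = α then (1:ℝ) else 0) * (if ν = β then (1:ℝ) else 0)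
        - 6 * (if μ = β then (1:ℝ) else 0) * (if ν = α then (1:ℝ) else 0))
      = ((Rkey μ.val ν.val α.val β.val : ℤ) : ℝ) := by
    simp only [Omega_eq_N, Rkey, ← dcast]
    push_cast
    ring
  rw [L, R, key]

theorem swap4 (g : Fin 8 → Fin 8 → Fin 8 → Fin 8 → ℝ) :
    (∑ ρ : Fin 8, ∑ σ : Fin 8, ∑ α : Fin 8, ∑ β : Fin 8, g ρ σ α β)
      = ∑ α : Fin 8, ∑ β : Fin 8, ∑ ρ : Fin 8, ∑ σ : Fin 8, g ρ σ α β := by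
  calc (∑ ρ : Fin 8, ∑ σ : Fin 8, ∑ α : Fin 8, ∑ β : Fin 8, g ρ σ α β)
      = ∑ ρ : Fin 8, ∑ α : Fin 8, ∑ σ : Fin 8, ∑ β : Fin 8, g ρ σ α β :=
        Finset.sum_congr rfl fun ρ _ => Finset.sum_comm
    _ = ∑ α : Fin 8, ∑ ρ : Fin 8, ∑ σ : Fin 8, ∑ β : Fin 8, g ρ σ α β := Finset.sum_comm
    _ = ∑ α : Fin 8, ∑ ρ : Fin 8, ∑ β : Fin 8, ∑ σ : Fin 8, g ρ σ α β :=
        Finset.sum_congr rfl fun α _ => Finset.sum_congr rfl fun ρ _ => Finset.sum_comm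
    _ = ∑ α : Fin 8, ∑ β : Fin 8, ∑ ρ : Fin 8, ∑ σ : Fin 8, g ρ σ α β :=
        Finset.sum_congr rfl fun α _ => Finset.sum_comm

/-- `T` satisfies the quadratic relation `(T + id) ∘ (T - 3 id) = 0` on antisymmetric
`8 × 8` matrices, i.e. `T(T F) = 2 T F + 3 F`. -/
theorem Top_quadratic_relation (F : Fin 8 → Fin 8 → ℝ)
    (hF : ∀ μ ν, F μ ν = -F ν μ) :
    ∀ μ ν, TOmega (TOmega F) μ ν = 2 * TOmega F μ ν + 3 * F μ ν := by
  intro μ ν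
  have step1 : TOmega (TOmega F) μ ν
      = ∑ ρ : Fin 8, ∑ σ : Fin 8, ∑ α : Fin 8, ∑ β : Fin 8,
          (1/4) * (Omega μ ν ρ σ * Omega ρ σ α β * F α β) := by
    simp only [TOmega, Finset.mul_sum]
    refine Finset.sum_congr rfl fun ρ _ => Finset.sum_congr rfl fun σ _ => ?_
    exact Finset.sum_congr rfl fun α _ => Finset.sum_congr rfl fun β _ => by ring
  rw [step1, swap4 (fun ρ σ α β => (1/4) * (Omega μ ν ρ σ * Omega ρ σ α β * F α β))]
  have step2 : ∀ α β : Fin 8,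
      (∑ ρ : Fin 8, ∑ σ : Fin 8, (1/4) * (Omega μ ν ρ σ * Omega ρ σ α β * F α β))
        = (Omega μ ν α β
            + (3/2) * (if μ = α then (1:ℝ) else 0) * (if ν = β then (1:ℝ) else 0)
            - (3/2) * (if μ = β then (1:ℝ) else 0) * (if ν = α then (1:ℝ) else 0)) * F α β := by
    intro α β
    have : (∑ ρ : Fin 8, ∑ σ : Fin 8, (1/4) * (Omega μ ν ρ σ * Omega ρ σ α β * F α β))
        = (∑ ρ : Fin 8, ∑ σ : Fin 8, Omega μ ν ρ σ * Omega ρ σ α β) * ((1/4) * F α β) := by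
      rw [Finset.sum_mul]
      refine Finset.sum_congr rfl fun ρ _ => ?_
      rw [Finset.sum_mul]
      exact Finset.sum_congr rfl fun σ _ => by ring
    rw [this, keyR]
    ring
  simp only [step2]
  have split : ∀ α β : Fin 8,
      (Omega μ ν α β
        + (3/2) * (if μ = α then (1:ℝ) else 0) * (if ν = β then (1:ℝ) else 0)
        - (3/2) * (if μ = β then (1:ℝ) else 0) * (if ν = α then (1:ℝ) else 0)) * F α β
      = Omega μ ν α β * F α β
        + (if μ = α then (1:ℝ) else 0) * ((if ν = β then (1:ℝ) else 0) * ((3/2) * F α β))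
        - (if μ = β then (1:ℝ) else 0) * ((if ν = α then (1:ℝ) else 0) * ((3/2) * F α β)) := by
    intro α β; ring
  have dd : ∀ G : Fin 8 → Fin 8 → ℝ, (∑ α : Fin 8, ∑ β : Fin 8,
      (if μ = α then (1:ℝ) else 0) * ((if ν = β then (1:ℝ) else 0) * G α β)) = G μ ν := by
    intro G
    simp [ite_mul, Finset.sum_ite_eq, Finset.mem_univ]
  have dd2 : ∀ G : Fin 8 → Fin 8 → ℝ, (∑ α : Fin 8, ∑ β : Fin 8,
      (if μ = β then (1:ℝ) else 0) * ((if ν = α then (1:ℝ) else 0) * G α β)) = G ν μ := by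
    intro G
    simp [ite_mul, Finset.sum_ite_eq, Finset.mem_univ, Finset.sum_comm]
  simp only [split, Finset.sum_add_distrib, Finset.sum_sub_distrib]
  rw [dd (fun α β => (3/2) * F α β), dd2 (fun α β => (3/2) * F α β)]
  rw [hF ν μ]
  simp only [TOmega]
  ring
end

section
/- Let F be an antisymmetric 8×8 matrix with entries in a complex (or real) vector space of matrices, and let T be defined by (T F)_{μν} = (1/2) Σ_{ρ,σ} Ω_{μνρσ} F_{ρσ}. Then T F = −F holds if and only if F satisfies the following seven linear equations: F_{01}+F_{23}+F_{45}+F_{67}=0, F_{02}−F_{13}+F_{46}−F_{57}=0, F_{03}+F_{12}−F_{47}−F_{56}=0, F_{05}+F_{14}+F_{27}+F_{36}=0, F_{06}−F_{17}+F_{24}−F_{35}=0, F_{07}+F_{16}−F_{25}−F_{34}=0, F_{04}−F_{15}−F_{26}+F_{37}=0. -/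
/-!
`Ω` is a signed sum of the volume forms of 14 coordinate 4-planes, and contracting the volume
form of a 4-plane with an antisymmetric `F` is the Hodge star of `F` inside that plane. This
makes `T F` explicit. Row `0` of `T F + F` consists of the seven linear forms of the theorem,
and every other entry `(T F + F)_{μν}` is, up to sign, the entry `(T F + F)_{0, μ xor ν}`:
the 28 index pairs split into the seven perfect matchings `{{μ, ν} | μ xor ν = j}`.
-/

namespace Matrix

theorem det_fin_four {R : Type*} [CommRing R] (M : Matrix (Fin 4) (Fin 4) R) :
    M.det =
      M 0 0 * M 1 1 * M 2 2 * M 3 3 - M 0 0 * M 1 1 * M 2 3 * M 3 2 -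
        M 0 0 * M 1 2 * M 2 1 * M 3 3 + M 0 0 * M 1 2 * M 2 3 * M 3 1 +
        M 0 0 * M 1 3 * M 2 1 * M 3 2 - M 0 0 * M 1 3 * M 2 2 * M 3 1 -
        M 0 1 * M 1 0 * M 2 2 * M 3 3 + M 0 1 * M 1 0 * M 2 3 * M 3 2 +
        M 0 1 * M 1 2 * M 2 0 * M 3 3 - M 0 1 * M 1 2 * M 2 3 * M 3 0 -
        M 0 1 * M 1 3 * M 2 0 * M 3 2 + M 0 1 * M 1 3 * M 2 2 * M 3 0 +
        M 0 2 * M 1 0 * M 2 1 * M 3 3 - M 0 2 * M 1 0 * M 2 3 * M 3 1 -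
        M 0 2 * M 1 1 * M 2 0 * M 3 3 + M 0 2 * M 1 1 * M 2 3 * M 3 0 +
        M 0 2 * M 1 3 * M 2 0 * M 3 1 - M 0 2 * M 1 3 * M 2 1 * M 3 0 -
        M 0 3 * M 1 0 * M 2 1 * M 3 2 + M 0 3 * M 1 0 * M 2 2 * M 3 1 +
        M 0 3 * M 1 1 * M 2 0 * M 3 2 - M 0 3 * M 1 1 * M 2 2 * M 3 0 -
        M 0 3 * M 1 2 * M 2 0 * M 3 1 + M 0 3 * M 1 2 * M 2 1 * M 3 0 := by
  rw [det_succ_row_zero]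
  simp only [Fin.sum_univ_four, det_fin_three, submatrix_apply]
  norm_num [Fin.succAbove, Fin.lt_def, show (Fin.succ 2 : Fin 4) = 3 from rfl,
    show ((3 : Fin 4) : ℕ) = 3 from rfl, show (Fin.castSucc 2 : Fin 4) = 2 from rfl]
  ring

section PlaneDual

variable {α R : Type*} [DecidableEq α] [CommRing R]

def wedge (a b : α) : Matrix α α R := single a b 1 - single b a 1

/-- The Hodge dual of `F` inside the coordinate 4-plane spanned by `p 0, …, p 3`. -/
def planeDual (p : Fin 4 → α) (F : Matrix α α R) : Matrix α α R :=
  F (p 2) (p 3) • wedge (p 0) (p 1) - F (p 1) (p 3) • wedge (p 0) (p 2) +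
    F (p 1) (p 2) • wedge (p 0) (p 3) + F (p 0) (p 3) • wedge (p 1) (p 2) -
    F (p 0) (p 2) • wedge (p 1) (p 3) + F (p 0) (p 1) • wedge (p 2) (p 3)

theorem sum_sum_det_boole_mul_eq_planeDual [Fintype α] (p : Fin 4 → α) (F : Matrix α α R)
    (hF : ∀ x y, F x y = -F y x) (μ ν : α) :
    ∑ ρ, ∑ σ, (of fun i j => if p i = ![μ, ν, ρ, σ] j then (1 : R) else 0).det * F ρ σ =
      2 * planeDual p F μ ν := by
  have boole_and (P Q : Prop) [Decidable P] [Decidable Q] :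
      (if P ∧ Q then (1 : R) else 0) = (if P then 1 else 0) * (if Q then 1 else 0) := by
    rw [ite_zero_mul_ite_zero, mul_one]
  simp only [det_fin_four, of_apply, cons_val_zero, cons_val_one, cons_val_two, cons_val_three,
    head_cons, tail_cons, ite_mul, mul_ite, one_mul, mul_one, zero_mul, mul_zero, sub_mul, add_mul,
    Finset.sum_add_distrib,
    Finset.sum_sub_distrib, Finset.sum_ite_irrel, Finset.sum_const_zero, Finset.sum_ite_eq,
    Finset.mem_univ, if_true]
  simp only [planeDual, wedge, add_apply, sub_apply, smul_apply, single_apply, smul_eq_mul,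
    boole_and]
  rw [hF (p 3) (p 2), hF (p 3) (p 1), hF (p 2) (p 1), hF (p 3) (p 0), hF (p 2) (p 0),
    hF (p 1) (p 0)]
  -- `![μ, ν, ρ, σ] j` was reduced in the conditions but not in their `Decidable` instances,
  -- so equal atoms agree only up to unfolding.
  ring!

end PlaneDual

end Matrix

open Matrix

theorem TOmega_eq_sum_planeDual (F : Fin 8 → Fin 8 → ℝ) (hF : ∀ μ ν, F μ ν = -F ν μ)
    (μ ν : Fin 8) : TOmega F μ ν = (OmegaBase.map fun p => p.2 * planeDual p.1 F μ ν).sum := by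
  simp only [TOmega, Omega, OmegaBase, List.map_cons, List.map_nil, List.sum_cons, List.sum_nil,
    add_zero, add_mul, mul_assoc, Finset.sum_add_distrib, ← Finset.mul_sum,
    sum_sum_det_boole_mul_eq_planeDual _ F hF]
  ring

theorem seven_equations_of_TOmega_zero_eq_neg (F : Fin 8 → Fin 8 → ℝ)
    (hF : ∀ μ ν, F μ ν = -F ν μ) (h : ∀ j, TOmega F 0 j = -F 0 j) :
    F 0 1 + F 2 3 + F 4 5 + F 6 7 = 0 ∧
      F 0 2 - F 1 3 + F 4 6 - F 5 7 = 0 ∧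
      F 0 3 + F 1 2 - F 4 7 - F 5 6 = 0 ∧
      F 0 5 + F 1 4 + F 2 7 + F 3 6 = 0 ∧
      F 0 6 - F 1 7 + F 2 4 - F 3 5 = 0 ∧
      F 0 7 + F 1 6 - F 2 5 - F 3 4 = 0 ∧
      F 0 4 - F 1 5 - F 2 6 + F 3 7 = 0 := by
  have h1 := h 1
  have h2 := h 2
  have h3 := h 3
  have h4 := h 4
  have h5 := h 5
  have h6 := h 6
  have h7 := h 7
  simp only [TOmega_eq_sum_planeDual F hF, OmegaBase, List.map_cons, List.map_nil, List.sum_cons,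
    List.sum_nil, planeDual, wedge, Matrix.add_apply, Matrix.sub_apply, Matrix.smul_apply,
    single_apply, cons_val, Fin.reduceEq, and_true, and_false, if_true, if_false, smul_eq_mul]
    at h1 h2 h3 h4 h5 h6 h7
  refine ⟨?_, ?_, ?_, ?_, ?_, ?_, ?_⟩ <;> linarith

set_option maxHeartbeats 1000000 in
theorem TOmega_eq_neg_of_seven_equations (F : Fin 8 → Fin 8 → ℝ) (hF : ∀ μ ν, F μ ν = -F ν μ)
    (h : F 0 1 + F 2 3 + F 4 5 + F 6 7 = 0 ∧
      F 0 2 - F 1 3 + F 4 6 - F 5 7 = 0 ∧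
      F 0 3 + F 1 2 - F 4 7 - F 5 6 = 0 ∧
      F 0 5 + F 1 4 + F 2 7 + F 3 6 = 0 ∧
      F 0 6 - F 1 7 + F 2 4 - F 3 5 = 0 ∧
      F 0 7 + F 1 6 - F 2 5 - F 3 4 = 0 ∧
      F 0 4 - F 1 5 - F 2 6 + F 3 7 = 0) (μ ν : Fin 8) :
    TOmega F μ ν = -F μ ν := by
  obtain ⟨e1, e2, e3, e4, e5, e6, e7⟩ := h
  have hμν := hF μ ν
  fin_cases μ <;> fin_cases ν <;>
  simp only [TOmega_eq_sum_planeDual F hF, OmegaBase, List.map_cons, List.map_nil, List.sum_cons,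
    List.sum_nil, planeDual, wedge, Matrix.add_apply, Matrix.sub_apply, Matrix.smul_apply,
    single_apply, cons_val, Fin.reduceFinMk, Fin.reduceEq, and_true, and_false, if_true, if_false,
    smul_eq_mul] at hμν ⊢ <;>
  linarith

/-- For an antisymmetric `8 × 8` matrix `F`, the condition `T F = -F` is equivalent to the
seven octonionic (Spin(7)) self-duality equations. -/
theorem TOmega_eq_neg_iff_seven_equations (F : Fin 8 → Fin 8 → ℝ)
    (hF : ∀ μ ν, F μ ν = -F ν μ) :
    (∀ μ ν, TOmega F μ ν = -F μ ν) ↔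
      (F 0 1 + F 2 3 + F 4 5 + F 6 7 = 0 ∧
       F 0 2 - F 1 3 + F 4 6 - F 5 7 = 0 ∧
       F 0 3 + F 1 2 - F 4 7 - F 5 6 = 0 ∧
       F 0 5 + F 1 4 + F 2 7 + F 3 6 = 0 ∧
       F 0 6 - F 1 7 + F 2 4 - F 3 5 = 0 ∧
       F 0 7 + F 1 6 - F 2 5 - F 3 4 = 0 ∧
       F 0 4 - F 1 5 - F 2 6 + F 3 7 = 0) :=
  ⟨fun h => seven_equations_of_TOmega_zero_eq_neg F hF fun j => h 0 j,
    TOmega_eq_neg_of_seven_equations F hF⟩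
end

section
/- Let γ ∈ ℝ, κ ∈ ℝ⁴, and set w(x) = (γ/2)·Σ_a x_a² + Σ_a κ_a x_a for x ∈ ℝ⁴. Let I ⊆ ℝ be an open interval, U = { x ∈ ℝ⁴ : w(x) ∈ I }, and let 𝒢 : I → ℝ be twice continuously differentiable; define G(x) = 𝒢(w(x)) and let H(x) = ℋ(w(x)) where ℋ : I → ℝ satisfies ℋ'(w) = e^{2𝒢(w)} for all w ∈ I. Then G and H satisfy Δ G + |∇G|² − |∇H|² = 0 at every point of U if and only if g := e^{𝒢} satisfies the ordinary differential equation g''(w)·(2γw + |κ|²) + 4γ·g'(w) − g(w)⁵·(2γw + |κ|²) = 0 for every w in the image w(U). -/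
/-- Partial derivative in the `a`-th coordinate direction on Euclidean ℝ⁴. -/
noncomputable def pdR (a : Fin 4) (f : EuclideanSpace ℝ (Fin 4) → ℝ)
    (x : EuclideanSpace ℝ (Fin 4)) : ℝ :=
  fderiv ℝ f x (EuclideanSpace.single a 1)

/-!
Since `∂_a w = γ x_a + κ_a`, we have `|∇w|² = 2γw + |κ|²` and `Δw = 4γ`, and `|∇H|² = e^{4𝒢}|∇w|²`;
so by the chain rule the scalar equation at `x` reads
`(𝒢'' + 𝒢'² − e^{4𝒢})(2γw + |κ|²) + 4γ𝒢' = 0` at `w(x)`. As `g' = g𝒢'` and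
`g'' = g(𝒢'' + 𝒢'²)`, the left side of the ODE at `t` is `g(t) ≠ 0` times the same expression.
-/

open Filter Topology

section QuadProfile

variable {ι : Type*} [Fintype ι] (γ : ℝ) (κ : ι → ℝ)

noncomputable def quadProfile (x : EuclideanSpace ℝ ι) : ℝ :=
  (γ / 2) * ∑ a, (x a) ^ 2 + ∑ a, κ a * x a

theorem hasFDerivAt_quadProfile (x : EuclideanSpace ℝ ι) :
    HasFDerivAt (quadProfile γ κ)
      (∑ a, (γ * x a + κ a) • (EuclideanSpace.proj a : EuclideanSpace ℝ ι →L[ℝ] ℝ)) x := by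
  have hproj (a : ι) : HasFDerivAt (fun y : EuclideanSpace ℝ ι => y a)
      (EuclideanSpace.proj a : EuclideanSpace ℝ ι →L[ℝ] ℝ) x :=
    (EuclideanSpace.proj (𝕜 := ℝ) a).hasFDerivAt
  have h := (HasFDerivAt.fun_sum (u := .univ) fun a _ => (hproj a).pow 2).const_mul (γ / 2) |>.add
    (HasFDerivAt.fun_sum (u := .univ) fun a _ => (hproj a).const_mul (κ a))
  refine h.congr_fderiv (ContinuousLinearMap.ext fun v => ?_)
  simp only [add_apply, smul_apply, sum_apply, PiLp.proj_apply, smul_eq_mul, nsmul_eq_mul,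
    Nat.cast_ofNat, Nat.add_one_sub_one, pow_one, Finset.mul_sum, ← Finset.sum_add_distrib]
  refine Finset.sum_congr rfl fun a _ => ?_
  ring

theorem sum_sq_grad_quadProfile (x : EuclideanSpace ℝ ι) :
    ∑ a, (γ * x a + κ a) ^ 2 = 2 * γ * quadProfile γ κ x + ∑ a, κ a ^ 2 := by
  simp only [quadProfile, mul_add, Finset.mul_sum, ← Finset.sum_add_distrib]
  refine Finset.sum_congr rfl fun a _ => ?_
  ring

end QuadProfile

section PartialDerivatives

variable {γ : ℝ} {κ : Fin 4 → ℝ} {x : EuclideanSpace ℝ (Fin 4)} (a : Fin 4)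

theorem pdR_comp {f : ℝ → ℝ} {f' : ℝ} {u : EuclideanSpace ℝ (Fin 4) → ℝ}
    (hf : HasDerivAt f f' (u x)) (hu : DifferentiableAt ℝ u x) :
    pdR a (fun y => f (u y)) x = f' * pdR a u x := by
  have h : HasFDerivAt (fun y => f (u y)) (f' • fderiv ℝ u x) x :=
    hf.comp_hasFDerivAt x hu.hasFDerivAt
  simp [pdR, h.fderiv]

theorem pdR_quadProfile : pdR a (quadProfile γ κ) x = γ * x a + κ a := by
  simp [pdR, (hasFDerivAt_quadProfile γ κ x).fderiv]

theorem pdR_comp_quadProfile {f : ℝ → ℝ} {f' : ℝ} (hf : HasDerivAt f f' (quadProfile γ κ x)) :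
    pdR a (fun y => f (quadProfile γ κ y)) x = f' * (γ * x a + κ a) := by
  rw [pdR_comp a hf (hasFDerivAt_quadProfile γ κ x).differentiableAt, pdR_quadProfile]

theorem pdR_pdR_comp_quadProfile {f : ℝ → ℝ}
    (hf : ∀ᶠ s in 𝓝 (quadProfile γ κ x), DifferentiableAt ℝ f s)
    (hf' : DifferentiableAt ℝ (deriv f) (quadProfile γ κ x)) :
    pdR a (fun y => pdR a (fun z => f (quadProfile γ κ z)) y) x =
      deriv (deriv f) (quadProfile γ κ x) * (γ * x a + κ a) ^ 2
        + deriv f (quadProfile γ κ x) * γ := by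
  have hw := hasFDerivAt_quadProfile γ κ
  have hfirst : (fun y => pdR a (fun z => f (quadProfile γ κ z)) y) =ᶠ[𝓝 x]
      fun y => deriv f (quadProfile γ κ y) * (γ * y a + κ a) := by
    filter_upwards [(hw x).continuousAt.eventually hf] with y hy
    exact pdR_comp_quadProfile a hy.hasDerivAt
  have hlin : HasFDerivAt (fun y : EuclideanSpace ℝ (Fin 4) => γ * y a + κ a)
      (γ • (EuclideanSpace.proj a : EuclideanSpace ℝ (Fin 4) →L[ℝ] ℝ)) x :=
    ((EuclideanSpace.proj (𝕜 := ℝ) a).hasFDerivAt.const_mul γ).add_const (κ a)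
  have hprod : HasFDerivAt (fun y => deriv f (quadProfile γ κ y) * (γ * y a + κ a)) _ x :=
    (hf'.hasDerivAt.comp_hasFDerivAt x (hw x)).fun_mul hlin
  rw [pdR, hfirst.fderiv_eq, hprod.fderiv]
  simp only [Function.comp_apply, add_apply, smul_apply, sum_apply, PiLp.proj_apply,
    PiLp.single_apply, smul_eq_mul, mul_ite, mul_one, mul_zero, Finset.sum_ite_eq',
    Finset.mem_univ, ↓reduceIte]
  ring

end PartialDerivatives

theorem deriv_deriv_exp_comp {f : ℝ → ℝ} {t : ℝ} (hf : ∀ᶠ s in 𝓝 t, DifferentiableAt ℝ f s)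
    (hf' : DifferentiableAt ℝ (deriv f) t) :
    deriv (deriv fun s => Real.exp (f s)) t =
      Real.exp (f t) * (deriv (deriv f) t + deriv f t ^ 2) := by
  have hfirst : deriv (fun s => Real.exp (f s)) =ᶠ[𝓝 t] fun s => Real.exp (f s) * deriv f s := by
    filter_upwards [hf] with s hs using _root_.deriv_exp hs
  have hsecond : HasDerivAt (fun s => Real.exp (f s) * deriv f s)
      (Real.exp (f t) * deriv f t * deriv f t + Real.exp (f t) * deriv (deriv f) t) t :=
    hf.self_of_nhds.hasDerivAt.exp.mul hf'.hasDerivAt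
  rw [hfirst.deriv_eq, hsecond.deriv]
  ring

noncomputable def scalarResidual (γ : ℝ) (κ : Fin 4 → ℝ) (𝒢 : ℝ → ℝ) (t : ℝ) : ℝ :=
  (deriv (deriv 𝒢) t + deriv 𝒢 t ^ 2 - Real.exp (𝒢 t) ^ 4) * (2 * γ * t + ∑ a, κ a ^ 2)
    + 4 * γ * deriv 𝒢 t

section Reduction

variable {γ : ℝ} {κ : Fin 4 → ℝ} {𝒢 : ℝ → ℝ}

theorem scalarExpression_eq_scalarResidual {ℋ : ℝ → ℝ} {x : EuclideanSpace ℝ (Fin 4)}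
    (h𝒢 : ∀ᶠ s in 𝓝 (quadProfile γ κ x), DifferentiableAt ℝ 𝒢 s)
    (h𝒢' : DifferentiableAt ℝ (deriv 𝒢) (quadProfile γ κ x))
    (hℋ : HasDerivAt ℋ (Real.exp (2 * 𝒢 (quadProfile γ κ x))) (quadProfile γ κ x)) :
    ∑ a, pdR a (fun y => pdR a (fun z => 𝒢 (quadProfile γ κ z)) y) x
        + ∑ a, pdR a (fun z => 𝒢 (quadProfile γ κ z)) x ^ 2
        - ∑ a, pdR a (fun z => ℋ (quadProfile γ κ z)) x ^ 2
      = scalarResidual γ κ 𝒢 (quadProfile γ κ x) := by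
  have hexp : Real.exp (2 * 𝒢 (quadProfile γ κ x)) = Real.exp (𝒢 (quadProfile γ κ x)) ^ 2 := by
    rw [← Real.exp_nat_mul]; norm_num
  rw [scalarResidual, ← sum_sq_grad_quadProfile]
  simp only [pdR_pdR_comp_quadProfile _ h𝒢 h𝒢', pdR_comp_quadProfile _ h𝒢.self_of_nhds.hasDerivAt,
    pdR_comp_quadProfile _ hℋ, hexp, Fin.sum_univ_four]
  ring

theorem reducedODE_eq_exp_mul_scalarResidual {t : ℝ} (h𝒢 : ∀ᶠ s in 𝓝 t, DifferentiableAt ℝ 𝒢 s)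
    (h𝒢' : DifferentiableAt ℝ (deriv 𝒢) t) :
    deriv (deriv fun s => Real.exp (𝒢 s)) t * (2 * γ * t + ∑ a, κ a ^ 2)
        + 4 * γ * deriv (fun s => Real.exp (𝒢 s)) t
        - Real.exp (𝒢 t) ^ 5 * (2 * γ * t + ∑ a, κ a ^ 2)
      = Real.exp (𝒢 t) * scalarResidual γ κ 𝒢 t := by
  rw [deriv_deriv_exp_comp h𝒢 h𝒢', _root_.deriv_exp h𝒢.self_of_nhds, scalarResidual]
  ring

end Reduction

theorem scalar_equation_iff_reduced_ODE_general
    (γ : ℝ) (κ : Fin 4 → ℝ) (I : Set ℝ) (hIopen : IsOpen I)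
    (𝒢 ℋ : ℝ → ℝ) (h𝒢 : ContDiffOn ℝ 2 𝒢 I)
    (hℋ : ∀ w ∈ I, HasDerivAt ℋ (Real.exp (2 * 𝒢 w)) w) :
    let w : EuclideanSpace ℝ (Fin 4) → ℝ :=
      fun x => (γ / 2) * ∑ a : Fin 4, (x a) ^ 2 + ∑ a : Fin 4, κ a * x a
    let U : Set (EuclideanSpace ℝ (Fin 4)) := {x | w x ∈ I}
    let G : EuclideanSpace ℝ (Fin 4) → ℝ := fun x => 𝒢 (w x)
    let H : EuclideanSpace ℝ (Fin 4) → ℝ := fun x => ℋ (w x)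
    let g : ℝ → ℝ := fun s => Real.exp (𝒢 s)
    ((∀ x ∈ U,
        (∑ a : Fin 4, pdR a (fun y => pdR a G y) x)
          + (∑ a : Fin 4, (pdR a G x) ^ 2) - (∑ a : Fin 4, (pdR a H x) ^ 2) = 0)
      ↔
     (∀ t ∈ w '' U,
        deriv (deriv g) t * (2 * γ * t + ∑ a : Fin 4, (κ a) ^ 2)
          + 4 * γ * deriv g t
          - (g t) ^ 5 * (2 * γ * t + ∑ a : Fin 4, (κ a) ^ 2) = 0)) := by
  intro w U G H g
  have h𝒢diff : ∀ t ∈ I, DifferentiableAt ℝ 𝒢 t := fun t ht =>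
    (h𝒢.contDiffAt (hIopen.mem_nhds ht)).differentiableAt (by norm_num)
  have h𝒢' : ∀ t ∈ I, DifferentiableAt ℝ (deriv 𝒢) t := fun t ht =>
    ((h𝒢.deriv_of_isOpen (m := 1) hIopen (by norm_num)).contDiffAt
      (hIopen.mem_nhds ht)).differentiableAt (by norm_num)
  have h𝒢nhds : ∀ t ∈ I, ∀ᶠ s in 𝓝 t, DifferentiableAt ℝ 𝒢 s := fun t ht =>
    eventually_of_mem (hIopen.mem_nhds ht) h𝒢diff
  have hw : w = quadProfile γ κ := rfl
  simp only [G, H, g, hw, Set.forall_mem_image]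
  refine forall₂_congr fun x (hx : quadProfile γ κ x ∈ I) => ?_
  rw [scalarExpression_eq_scalarResidual (h𝒢nhds _ hx) (h𝒢' _ hx) (hℋ _ hx),
    reducedODE_eq_exp_mul_scalarResidual (h𝒢nhds _ hx) (h𝒢' _ hx), mul_eq_zero,
    or_iff_right (Real.exp_ne_zero _)]

/-- For profile functions depending only on `w(x) = (γ/2)Σx_a² + Σκ_a x_a`, with
`ℋ' = e^{2𝒢}`, the scalar equation `ΔG + |∇G|² − |∇H|² = 0` on
`U = w⁻¹(I)` is equivalent to the ODE
`g''(2γw+|κ|²) + 4γg' − g⁵(2γw+|κ|²) = 0` for `g = e^𝒢` on `w(U)`. -/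
theorem scalar_equation_iff_reduced_ODE
    (γ : ℝ) (κ : Fin 4 → ℝ) (I : Set ℝ) (hIopen : IsOpen I) (hIconn : I.OrdConnected)
    (𝒢 ℋ : ℝ → ℝ) (h𝒢 : ContDiffOn ℝ 2 𝒢 I)
    (hℋ : ∀ w ∈ I, HasDerivAt ℋ (Real.exp (2 * 𝒢 w)) w) :
    let w : EuclideanSpace ℝ (Fin 4) → ℝ :=
      fun x => (γ / 2) * ∑ a : Fin 4, (x a) ^ 2 + ∑ a : Fin 4, κ a * x a
    let U : Set (EuclideanSpace ℝ (Fin 4)) := {x | w x ∈ I}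
    let G : EuclideanSpace ℝ (Fin 4) → ℝ := fun x => 𝒢 (w x)
    let H : EuclideanSpace ℝ (Fin 4) → ℝ := fun x => ℋ (w x)
    let g : ℝ → ℝ := fun s => Real.exp (𝒢 s)
    ((∀ x ∈ U,
        (∑ a : Fin 4, pdR a (fun y => pdR a G y) x)
          + (∑ a : Fin 4, (pdR a G x) ^ 2) - (∑ a : Fin 4, (pdR a H x) ^ 2) = 0)
      ↔
     (∀ t ∈ w '' U,
        deriv (deriv g) t * (2 * γ * t + ∑ a : Fin 4, (κ a) ^ 2)
          + 4 * γ * deriv g t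
          - (g t) ^ 5 * (2 * γ * t + ∑ a : Fin 4, (κ a) ^ 2) = 0)) :=
  scalar_equation_iff_reduced_ODE_general γ κ I hIopen 𝒢 ℋ h𝒢 hℋ
end

section
/- The function g(w) = (w²/3 − 1)^{−1/2} satisfies the ordinary differential equation g''(w)·w + 2·g'(w) − g(w)⁵·w = 0 for all w > √3. -/
/-!
With `u = w²/3 − 1` one has `g = u^{-1/2}`, `g' = -(w/3) u^{-3/2}` and
`g'' = -(1/3) u^{-3/2} + (w²/3) u^{-5/2}`, so `g'' w + 2 g' = w u^{-5/2} (w²/3 − u) = w u^{-5/2} = g⁵ w`.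
-/

open Filter Topology

lemma sq_div_three_sub_one_pos {w : ℝ} (hw : √3 < w) : 0 < w ^ 2 / 3 - 1 := by
  have h3 : √3 ^ 2 = 3 := Real.sq_sqrt (by norm_num)
  nlinarith [Real.sqrt_nonneg 3]

lemma hasDerivAt_rpow_sq_div_three_sub_one (p : ℝ) {x : ℝ} (hx : 0 < x ^ 2 / 3 - 1) :
    HasDerivAt (fun y : ℝ => (y ^ 2 / 3 - 1) ^ p) (2 * p / 3 * x * (x ^ 2 / 3 - 1) ^ (p - 1)) x := by
  have hu : HasDerivAt (fun y : ℝ => y ^ 2 / 3 - 1) (2 * x / 3) x := by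
    simpa using ((hasDerivAt_pow 2 x).div_const 3).sub_const 1
  convert hu.rpow_const (p := p) (Or.inl hx.ne') using 1
  ring

lemma deriv_rpow_sq_div_three_sub_one_eventuallyEq {w : ℝ} (hw : √3 < w) :
    deriv (fun y : ℝ => (y ^ 2 / 3 - 1) ^ (-(1 / 2 : ℝ))) =ᶠ[𝓝 w]
      fun x => -(x / 3) * (x ^ 2 / 3 - 1) ^ (-(3 / 2 : ℝ)) := by
  filter_upwards [lt_mem_nhds hw] with x hx
  convert (hasDerivAt_rpow_sq_div_three_sub_one (-(1 / 2)) (sq_div_three_sub_one_pos hx)).deriv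
    using 1
  rw [show -(1 / 2 : ℝ) - 1 = -(3 / 2) by norm_num]
  ring

lemma hasDerivAt_neg_div_three_mul_rpow_sq_div_three_sub_one {w : ℝ} (hw : 0 < w ^ 2 / 3 - 1) :
    HasDerivAt (fun x : ℝ => -(x / 3) * (x ^ 2 / 3 - 1) ^ (-(3 / 2 : ℝ)))
      (-(1 / 3) * (w ^ 2 / 3 - 1) ^ (-(3 / 2 : ℝ)) + w ^ 2 / 3 * (w ^ 2 / 3 - 1) ^ (-(5 / 2 : ℝ)))
      w := by
  have hlin : HasDerivAt (fun x : ℝ => -(x / 3)) (-(1 / 3)) w :=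
    ((hasDerivAt_id w).div_const 3).neg
  refine (hlin.mul (hasDerivAt_rpow_sq_div_three_sub_one (-(3 / 2)) hw)).congr_deriv ?_
  rw [show -(3 / 2 : ℝ) - 1 = -(5 / 2) by norm_num]
  ring

/-- `g(w) = (w²/3 − 1)^{−1/2}` solves `g''·w + 2g' − g⁵·w = 0` for `w > √3`. -/
theorem radial_explicit_solution :
    let g : ℝ → ℝ := fun w => (w ^ 2 / 3 - 1) ^ (-(1 / 2 : ℝ))
    ∀ w : ℝ, Real.sqrt 3 < w →
      deriv (deriv g) w * w + 2 * deriv g w - g w ^ 5 * w = 0 := by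
  intro g w hw
  set u := w ^ 2 / 3 - 1 with hu
  have hu_pos : 0 < u := sq_div_three_sub_one_pos hw
  have hg' := deriv_rpow_sq_div_three_sub_one_eventuallyEq hw
  have hg'' : deriv (deriv g) w =
      -(1 / 3) * u ^ (-(3 / 2 : ℝ)) + w ^ 2 / 3 * u ^ (-(5 / 2 : ℝ)) := by
    rw [hg'.deriv_eq]
    exact (hasDerivAt_neg_div_three_mul_rpow_sq_div_three_sub_one hu_pos).deriv
  have h_three_halves : u ^ (-(3 / 2 : ℝ)) = u ^ (-(5 / 2 : ℝ)) * u := by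
    rw [← Real.rpow_add_one hu_pos.ne']
    norm_num
  have h_fifth : (u ^ (-(1 / 2 : ℝ))) ^ 5 = u ^ (-(5 / 2 : ℝ)) := by
    rw [← Real.rpow_mul_natCast hu_pos.le]
    norm_num
  show _ * w + 2 * _ - (u ^ (-(1 / 2 : ℝ))) ^ 5 * w = 0
  rw [hg'', hg'.eq_of_nhds, h_three_halves, h_fifth, hu]
  ring
end

section
/- Define G(r) = −(1/2)·log(r⁴ − 1) and H(r) = (√3/2)·log((r² − 1)/(r² + 1)) for r > 1. Then for all r > 1: (i) G''(r) + (3/r)·G'(r) + G'(r)² − H'(r)² = 0, and (ii) H'(r) = 2√3·r·e^{2G(r)}. -/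
/-!
Both profiles have rational derivatives: `G' = -2r³/(r⁴-1)` and `H' = 2√3 r/(r⁴-1)`, whence
`G'' = (2r⁶+6r²)/(r⁴-1)²`. Equation (i) is then the polynomial identity
`(2r⁶+6r²) - 6r²(r⁴-1) + 4r⁶ - 12r² = 0`, and (ii) holds because `e^{2G} = (r⁴-1)⁻¹` for `r > 1`.
-/

open Real Filter

namespace SphericallySymmetric

noncomputable def profileG (r : ℝ) : ℝ := -(1 / 2) * log (r ^ 4 - 1)

noncomputable def profileH (r : ℝ) : ℝ := (√3 / 2) * log ((r ^ 2 - 1) / (r ^ 2 + 1))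

variable {r : ℝ}

theorem hasDerivAt_profileG (hr : r ^ 4 ≠ 1) :
    HasDerivAt profileG (-2 * r ^ 3 / (r ^ 4 - 1)) r := by
  have hden : r ^ 4 - 1 ≠ 0 := sub_ne_zero.mpr hr
  have h := ((((hasDerivAt_pow 4 r).sub_const 1).log hden).const_mul (-(1 / 2) : ℝ))
  refine h.congr_deriv ?_
  field_simp
  norm_num

theorem hasDerivAt_profileH (hr : r ^ 2 ≠ 1) :
    HasDerivAt profileH (2 * √3 * r / (r ^ 4 - 1)) r := by
  have hm : r ^ 2 - 1 ≠ 0 := sub_ne_zero.mpr hr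
  have hp : r ^ 2 + 1 ≠ 0 := by positivity
  have h := (((((hasDerivAt_pow 2 r).sub_const 1).fun_div ((hasDerivAt_pow 2 r).add_const 1) hp).log
    (div_ne_zero hm hp)).const_mul (√3 / 2))
  refine h.congr_deriv ?_
  have h4 : r ^ 4 - 1 = (r ^ 2 - 1) * (r ^ 2 + 1) := by ring
  rw [h4]
  field_simp
  norm_num
  ring

theorem deriv_deriv_profileG (hr : r ^ 4 ≠ 1) :
    deriv (deriv profileG) r = (2 * r ^ 6 + 6 * r ^ 2) / (r ^ 4 - 1) ^ 2 := by
  have hden : r ^ 4 - 1 ≠ 0 := sub_ne_zero.mpr hr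
  have hderiv : deriv profileG =ᶠ[nhds r] fun x => -2 * x ^ 3 / (x ^ 4 - 1) := by
    filter_upwards [(continuous_pow 4).continuousAt.eventually_ne hr] with x hx
    exact (hasDerivAt_profileG hx).deriv
  rw [hderiv.deriv_eq]
  have h := (((hasDerivAt_pow 3 r).const_mul (-2 : ℝ)).fun_div ((hasDerivAt_pow 4 r).sub_const 1) hden)
  rw [h.deriv]
  field_simp
  norm_num
  ring

theorem exp_two_mul_profileG (hr : 1 < r ^ 4) : exp (2 * profileG r) = (r ^ 4 - 1)⁻¹ := by
  rw [profileG, ← mul_assoc, show (2 : ℝ) * -(1 / 2) = -1 by norm_num, neg_one_mul, exp_neg,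
    exp_log (sub_pos.mpr hr)]

-- At `r = 0` the junk value `3 / 0 = 0` is harmless, since `G'(0) = 0`.
theorem profile_radial_equation (hr : r ^ 4 ≠ 1) :
    deriv (deriv profileG) r + (3 / r) * deriv profileG r + deriv profileG r ^ 2
      - deriv profileH r ^ 2 = 0 := by
  have hr₂ : r ^ 2 ≠ 1 := fun h => hr (by rw [show r ^ 4 = (r ^ 2) ^ 2 by ring, h, one_pow])
  have hden : r ^ 4 - 1 ≠ 0 := sub_ne_zero.mpr hr
  rw [deriv_deriv_profileG hr, (hasDerivAt_profileG hr).deriv, (hasDerivAt_profileH hr₂).deriv]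
  field_simp
  rw [show (√3) ^ 2 = 3 from sq_sqrt (by norm_num)]
  ring

theorem deriv_profileH_eq_exp (hr : 1 < r ^ 4) :
    deriv profileH r = 2 * √3 * r * exp (2 * profileG r) := by
  have hr₂ : r ^ 2 ≠ 1 := fun h => hr.ne' (by rw [show r ^ 4 = (r ^ 2) ^ 2 by ring, h, one_pow])
  rw [(hasDerivAt_profileH hr₂).deriv, exp_two_mul_profileG hr, div_eq_mul_inv]

end SphericallySymmetric

open SphericallySymmetric in
/-- The spherically symmetric profile functions `G(r) = −(1/2)log(r⁴−1)`,
`H(r) = (√3/2)log((r²−1)/(r²+1))` satisfy, for `r > 1`: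
(i) `G'' + (3/r)G' + G'² − H'² = 0` and (ii) `H' = 2√3·r·e^{2G}`. -/
theorem spherically_symmetric_solution :
    let G : ℝ → ℝ := fun r => -(1 / 2) * Real.log (r ^ 4 - 1)
    let H : ℝ → ℝ := fun r => (Real.sqrt 3 / 2) * Real.log ((r ^ 2 - 1) / (r ^ 2 + 1))
    ∀ r : ℝ, 1 < r →
      (deriv (deriv G) r + (3 / r) * deriv G r + (deriv G r) ^ 2 - (deriv H r) ^ 2 = 0) ∧
      (deriv H r = 2 * Real.sqrt 3 * r * Real.exp (2 * G r)) := by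
  intro G H r hr
  have hr₄ : 1 < r ^ 4 := one_lt_pow₀ hr (by norm_num)
  exact ⟨profile_radial_equation hr₄.ne', deriv_profileH_eq_exp hr₄⟩
end

section
/- The function g(w) = (1/2)·21^{1/4}·w^{−3/4} satisfies the ordinary differential equation g''(w) = w·g(w)⁵ for all w > 0. -/
/-!
Power-law ansatz: `(c w^p)'' = c p (p - 1) w^(p - 2)` and `w (c w^p)^5 = c^5 w^(5p + 1)`.
Matching the exponents forces `p = -3/4`, and then matching the coefficients forces
`c^4 = p (p - 1) = 21/16`, i.e. `c = 21^(1/4) / 2`.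
-/

open Real

theorem deriv_deriv_const_mul_rpow (c p x : ℝ) :
    deriv (deriv fun x => c * x ^ p) x = c * (p * (p - 1)) * x ^ (p - 2) := by
  simp only [deriv_const_mul_field', Real.deriv_rpow_const']
  rw [sub_sub, one_add_one_eq_two]
  ring

theorem deriv_deriv_const_mul_rpow_eq_mul_pow {c p : ℝ} {n : ℕ} (hp : p - 2 = 1 + n * p)
    (hc : c * (p * (p - 1)) = c ^ n) {w : ℝ} (hw : 0 < w) :
    deriv (deriv fun x => c * x ^ p) w = w * (c * w ^ p) ^ n := by
  rw [deriv_deriv_const_mul_rpow, hc, hp, rpow_add hw, rpow_one, mul_comm (n : ℝ),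
    rpow_mul_natCast hw.le, mul_pow]
  ring

theorem rpow_one_div_four_pow_four {x : ℝ} (hx : 0 ≤ x) : (x ^ ((1 : ℝ) / 4)) ^ 4 = x := by
  simpa [one_div] using rpow_inv_natCast_pow hx (n := 4) (by norm_num)

/-- `g(w) = (1/2)·21^{1/4}·w^{−3/4}` solves `g'' = w·g⁵` for `w > 0`. -/
theorem domain_wall_explicit_solution :
    let g : ℝ → ℝ := fun w => (1 / 2) * (21 : ℝ) ^ ((1 : ℝ) / 4) * w ^ (-(3 : ℝ) / 4)
    ∀ w : ℝ, 0 < w → deriv (deriv g) w = w * g w ^ 5 := by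
  intro g w hw
  have hc : (1 / 2 * (21 : ℝ) ^ ((1 : ℝ) / 4)) ^ 4 = -(3 : ℝ) / 4 * (-(3 : ℝ) / 4 - 1) := by
    rw [mul_pow, rpow_one_div_four_pow_four (by norm_num)]
    norm_num
  refine deriv_deriv_const_mul_rpow_eq_mul_pow (by norm_num) ?_ hw
  rw [pow_succ', hc]
end

section
/- Define G(w) = (1/4)·log 21 − log 2 − (3/4)·log w and H(w) = (√21/4)·log w for w > 0. Then for all w > 0: (i) H'(w) = √w·e^{2G(w)}, and (ii) G''(w) + G'(w)² − H'(w)² = 0. -/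
/-! Since `deriv log x = x⁻¹` at every real `x` (at `0` both sides are junk `0`), the formulas
`G' = -3/(4w)`, `G'' = 3/(4w²)` and `H' = √21/(4w)` hold on all of `ℝ`, and (ii) is the arithmetic
`3/4 + 9/16 - 21/16 = 0`. For (i), `e^{2G} = (√21/4)·w^{-3/2}`, so `√w·e^{2G} = √21/(4w)`. -/

open Real

lemma deriv_const_mul_log (b : ℝ) : deriv (fun x => b * log x) = fun x => b * x⁻¹ := by
  funext x
  rw [deriv_const_mul_field, deriv_log]

lemma deriv_const_sub_mul_log (a b : ℝ) :
    deriv (fun x => a - b * log x) = fun x => -(b * x⁻¹) := by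
  funext x
  rw [deriv_const_sub, deriv_const_mul_log]

lemma deriv_deriv_const_sub_mul_log (a b x : ℝ) :
    deriv (deriv fun x => a - b * log x) x = b * (x ^ 2)⁻¹ := by
  rw [deriv_const_sub_mul_log, deriv.fun_neg, deriv_const_mul_field, deriv_inv, mul_neg, neg_neg]

lemma exp_sub_mul_log (a b : ℝ) {x : ℝ} (hx : 0 < x) :
    exp (a - b * log x) = exp a * x ^ (-b) := by
  rw [rpow_def_of_pos hx, sub_eq_add_neg, exp_add, ← neg_mul, mul_comm (-b)]

/-- The domain-wall profile functions `G(w) = (1/4)log 21 − log 2 − (3/4)log w`,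
`H(w) = (√21/4)log w` satisfy, for `w > 0`:
(i) `H' = √w·e^{2G}` and (ii) `G'' + G'² − H'² = 0`. -/
theorem domain_wall_profile_functions :
    let G : ℝ → ℝ := fun w => (1 / 4) * Real.log 21 - Real.log 2 - (3 / 4) * Real.log w
    let H : ℝ → ℝ := fun w => (Real.sqrt 21 / 4) * Real.log w
    ∀ w : ℝ, 0 < w →
      (deriv H w = Real.sqrt w * Real.exp (2 * G w)) ∧
      (deriv (deriv G) w + (deriv G w) ^ 2 - (deriv H w) ^ 2 = 0) := by
  intro G H w hw
  have hG' : deriv G = fun x => -(3 / 4 * x⁻¹) := deriv_const_sub_mul_log _ _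
  have hH' : deriv H = fun x => √21 / 4 * x⁻¹ := deriv_const_mul_log _
  have hG'' : deriv (deriv G) w = 3 / 4 * (w ^ 2)⁻¹ := deriv_deriv_const_sub_mul_log _ _ _
  have hexp_const : exp (2 * ((1 / 4) * log 21 - log 2)) = √21 / 4 := by
    have hlog : 2 * ((1 / 4) * log 21 - log 2) = log (√21 / 4) := by
      rw [log_div (by positivity) (by norm_num), log_sqrt (by norm_num),
        show (4 : ℝ) = 2 ^ 2 by norm_num, log_pow]
      push_cast
      ring
    rw [hlog, exp_log (by positivity)]
  have hsqrt_mul_rpow : √w * w ^ (-(2 * (3 / 4) : ℝ)) = w⁻¹ := by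
    rw [sqrt_eq_rpow, ← rpow_add hw, ← rpow_neg_one]
    norm_num
  refine ⟨?_, ?_⟩
  · show deriv H w = √w * exp (2 * ((1 / 4) * log 21 - log 2 - (3 / 4) * log w))
    rw [hH', mul_sub, ← mul_assoc, exp_sub_mul_log _ _ hw, hexp_const, mul_left_comm,
      hsqrt_mul_rpow]
  · rw [hG'', hG', hH']
    simp only [neg_sq, mul_pow, div_pow, inv_pow, sq_sqrt (show (0 : ℝ) ≤ 21 by norm_num)]
    ring
end

section
/- Let c ∈ ℝ and let G : ℝ³ → ℝ be a smooth function such that Σ_{i=1}^{3} ∂_i∂_i G = 4c² and Σ_{i=1}^{3} (∂_i G)² = c² at every point of ℝ³. Then c = 0 and ∇G = 0, i.e. G is constant. -/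
/-- Partial derivative in the `i`-th coordinate direction on Euclidean ℝ³. -/
noncomputable def pd3 (i : Fin 3) (f : EuclideanSpace ℝ (Fin 3) → ℝ)
    (x : EuclideanSpace ℝ (Fin 3)) : ℝ :=
  fderiv ℝ f x (EuclideanSpace.single i 1)

theorem pd3_smooth {f} (hf : ContDiff ℝ (⊤ : ℕ∞) f) (i : Fin 3) : ContDiff ℝ (⊤ : ℕ∞) (pd3 i f) :=
  (hf.fderiv_right (by simp)).clm_apply contDiff_const

theorem pd3_symm {f} (hf : ContDiff ℝ (⊤ : ℕ∞) f) (i j : Fin 3) (x : EuclideanSpace ℝ (Fin 3)) :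
    pd3 i (pd3 j f) x = pd3 j (pd3 i f) x := by
  have hsym := hf.contDiffAt (x := x) |>.isSymmSndFDerivAt (by rw [minSmoothness_of_isRCLikeNormedField]; exact WithTop.coe_le_coe.mpr le_top)
  have hd : DifferentiableAt ℝ (fderiv ℝ f) x :=
    ((hf.fderiv_right (m := (⊤ : ℕ∞)) (by simp)).differentiable (by simp)).differentiableAt
  unfold pd3
  rw [fderiv_clm_apply hd (differentiableAt_const _), fderiv_clm_apply hd (differentiableAt_const _)]
  simp [hsym (EuclideanSpace.single i 1) (EuclideanSpace.single j 1)]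

theorem pd3_const (i : Fin 3) (a : ℝ) (x) : pd3 i (fun _ => a) x = 0 := by
  simp [pd3]

theorem pd3_sum {ι : Type*} (s : Finset ι) (g : ι → EuclideanSpace ℝ (Fin 3) → ℝ)
    (hg : ∀ k ∈ s, ContDiff ℝ (⊤ : ℕ∞) (g k)) (j : Fin 3) (x) :
    pd3 j (fun y => ∑ k ∈ s, g k y) x = ∑ k ∈ s, pd3 j (g k) x := by
  unfold pd3
  rw [fderiv_fun_sum (fun k hk => ((hg k hk).differentiable (by simp)).differentiableAt)]
  simp

theorem pd3_mul {a b : EuclideanSpace ℝ (Fin 3) → ℝ} (ha : ContDiff ℝ (⊤ : ℕ∞) a)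
    (hb : ContDiff ℝ (⊤ : ℕ∞) b) (j : Fin 3) (x) :
    pd3 j (fun y => a y * b y) x = a x * pd3 j b x + b x * pd3 j a x := by
  unfold pd3
  rw [fderiv_fun_mul ((ha.differentiable (by simp)).differentiableAt)
    ((hb.differentiable (by simp)).differentiableAt)]
  simp [mul_comm]

theorem pd3_congr {f g : EuclideanSpace ℝ (Fin 3) → ℝ} (h : ∀ y, f y = g y) (j : Fin 3) (x) :
    pd3 j f x = pd3 j g x := by
  have : f = g := funext h
  rw [this]

/-- Rigidity: if a smooth `G : ℝ³ → ℝ` satisfies `ΔG = 4c²` and `|∇G|² = c²` everywhere,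
then `c = 0` and `G` is constant (its derivative vanishes identically). -/
theorem rigidity_laplace_eikonal
    (c : ℝ) (G : EuclideanSpace ℝ (Fin 3) → ℝ) (hG : ContDiff ℝ (⊤ : ℕ∞) G)
    (hlap : ∀ x, (∑ i : Fin 3, pd3 i (fun y => pd3 i G y) x) = 4 * c ^ 2)
    (hgrad : ∀ x, (∑ i : Fin 3, (pd3 i G x) ^ 2) = c ^ 2) :
    c = 0 ∧ (∀ x, fderiv ℝ G x = 0) ∧ (∀ x y, G x = G y) := by
  set g : Fin 3 → EuclideanSpace ℝ (Fin 3) → ℝ := fun i => pd3 i G with hg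
  have hgs : ∀ i, ContDiff ℝ (⊤ : ℕ∞) (g i) := fun i => pd3_smooth hG i
  have hHs : ∀ i j, ContDiff ℝ (⊤ : ℕ∞) (fun y => pd3 i (g j) y) := fun i j => pd3_smooth (hgs j) i
  -- Step 1: ∑ i, g i x * pd3 j (g i) x = 0
  have step1 : ∀ (j : Fin 3) (x), ∑ i : Fin 3, g i x * pd3 j (g i) x = 0 := by
    intro j x
    have h0 : pd3 j (fun y => ∑ i : Fin 3, (g i y) ^ 2) x = 0 := by
      rw [pd3_congr (fun y => hgrad y) j x, pd3_const]
    rw [pd3_sum _ _ (fun k _ => (hgs k).pow 2) j x] at h0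
    have hterm : ∀ i : Fin 3, pd3 j (fun y => (g i y) ^ 2) x = 2 * (g i x * pd3 j (g i) x) := by
      intro i
      have := pd3_mul (hgs i) (hgs i) j x
      rw [pd3_congr (fun y => (sq (g i y)) : ∀ y, (g i y)^2 = g i y * g i y) j x, this]
      ring
    simp only [hterm, ← Finset.mul_sum] at h0
    linarith
  -- Step 2: ∑ j, pd3 j (pd3 j (g i)) x = 0  (commute derivatives, use hlap)
  have step2 : ∀ (i : Fin 3) (x), ∑ j : Fin 3, pd3 j (fun y => pd3 j (g i) y) x = 0 := by
    intro i x
    have hcomm : ∀ (j : Fin 3) (y), pd3 j (fun z => pd3 j (g i) z) y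
        = pd3 i (fun z => pd3 j (g j) z) y := by
      intro j y
      calc pd3 j (fun z => pd3 j (g i) z) y
          = pd3 j (fun z => pd3 i (g j) z) y := by
            exact pd3_congr (fun z => pd3_symm hG j i z) j y
        _ = pd3 i (fun z => pd3 j (g j) z) y := pd3_symm (hgs j) j i y
    calc ∑ j : Fin 3, pd3 j (fun y => pd3 j (g i) y) x
        = ∑ j : Fin 3, pd3 i (fun y => pd3 j (g j) y) x := by
          exact Finset.sum_congr rfl (fun j _ => hcomm j x)
      _ = pd3 i (fun y => ∑ j : Fin 3, pd3 j (g j) y) x := by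
          rw [pd3_sum _ _ (fun k _ => hHs k k) i x]
      _ = pd3 i (fun _ => 4 * c ^ 2) x := pd3_congr (fun y => hlap y) i x
      _ = 0 := pd3_const _ _ _
  -- Step 3: Hessian vanishes
  have step3 : ∀ (i j : Fin 3) (x), pd3 j (g i) x = 0 := by
    intro i0 j0 x
    have key : ∑ j : Fin 3, ∑ i : Fin 3, (pd3 j (g i) x) ^ 2 = 0 := by
      have h1 : ∀ j : Fin 3, pd3 j (fun y => ∑ i : Fin 3, g i y * pd3 j (g i) y) x = 0 := by
        intro j
        rw [pd3_congr (fun y => step1 j y) j x, pd3_const]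
      have h2 : ∀ j : Fin 3,
          ∑ i : Fin 3, ((pd3 j (g i) x) ^ 2 + g i x * pd3 j (fun y => pd3 j (g i) y) x) = 0 := by
        intro j
        have := h1 j
        rw [pd3_sum _ _ (fun k _ => (hgs k).mul (hHs j k)) j x] at this
        rw [← this]
        refine Finset.sum_congr rfl (fun i _ => ?_)
        rw [pd3_mul (hgs i) (hHs j i) j x]
        ring
      have h3 : ∑ j : Fin 3, ∑ i : Fin 3, g i x * pd3 j (fun y => pd3 j (g i) y) x = 0 := by
        rw [Finset.sum_comm]
        refine Finset.sum_eq_zero (fun i _ => ?_)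
        rw [← Finset.mul_sum, step2 i x, mul_zero]
      have h4 : ∑ j : Fin 3, ∑ i : Fin 3,
          ((pd3 j (g i) x) ^ 2 + g i x * pd3 j (fun y => pd3 j (g i) y) x) = 0 :=
        Finset.sum_eq_zero (fun j _ => h2 j)
      simp only [Finset.sum_add_distrib] at h4
      rw [h3, add_zero] at h4
      exact h4
    have hnn : ∀ j ∈ Finset.univ, (0:ℝ) ≤ ∑ i : Fin 3, (pd3 j (g i) x) ^ 2 :=
      fun j _ => Finset.sum_nonneg (fun i _ => sq_nonneg _)
    have hj := (Finset.sum_eq_zero_iff_of_nonneg hnn).mp key j0 (Finset.mem_univ _)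
    have hi := (Finset.sum_eq_zero_iff_of_nonneg
      (fun i _ => sq_nonneg (pd3 j0 (g i) x))).mp hj i0 (Finset.mem_univ _)
    exact pow_eq_zero_iff (n := 2) (by norm_num) |>.mp hi
  -- Step 4: c = 0
  have hc : c = 0 := by
    have := hlap 0
    have hzero : ∑ i : Fin 3, pd3 i (fun y => pd3 i G y) (0 : EuclideanSpace ℝ (Fin 3)) = 0 :=
      Finset.sum_eq_zero (fun i _ => step3 i i 0)
    rw [hzero] at this
    nlinarith [sq_nonneg c]
  -- Step 5: gradient vanishes
  have hgz : ∀ (i : Fin 3) (x), pd3 i G x = 0 := by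
    intro i x
    have := hgrad x
    rw [hc] at this
    have h0 : ∑ j : Fin 3, (pd3 j G x) ^ 2 = 0 := by simpa using this
    have := (Finset.sum_eq_zero_iff_of_nonneg
      (fun j _ => sq_nonneg (pd3 j G x))).mp h0 i (Finset.mem_univ _)
    exact pow_eq_zero_iff (n := 2) (by norm_num) |>.mp this
  have hfz : ∀ x, fderiv ℝ G x = 0 := by
    intro x
    apply ContinuousLinearMap.coe_injective
    apply Module.Basis.ext (EuclideanSpace.basisFun (Fin 3) ℝ).toBasis
    intro i
    simpa [EuclideanSpace.basisFun_apply, pd3] using hgz i x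
  refine ⟨hc, hfz, fun x y => ?_⟩
  exact is_const_of_fderiv_eq_zero (hG.differentiable (by simp)) hfz x y
end
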